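/- arXiv:0909.2013 — 2 statements merged into one kernel-verified Lean document; each statement's English description precedes it below -/
import Mathlib

section
/- Let V be a finite-dimensional rational vector space, M ⊆ V a linear subspace, P ⊆ V a polyhedral cone, and F a face of P that is M-stable, meaning the relative interior of F meets M and ⟨F⟩ + M = V, where ⟨F⟩ is the linear span of differences of elements of F. Then the restriction map i* : V* → M* (dual of the inclusion) restricts to a bijection from the normal cone N_F P onto the normal cone N_{F∩M}(P∩M). -/
/-- A polyhedral cone: intersection of finitely many closed half-spaces through the origin. -/
def IsPolyhedralCone {W : Type*} [AddCommGroup W] [Module ℚ W] (P : Set W) : Prop :=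
  ∃ s : Finset (Module.Dual ℚ W), P = {x | ∀ l ∈ s, 0 ≤ l x}

/-- The normal cone of a face `F` of `P`: functionals attaining their minimum over `P` on `F`. -/
def normalCone {W : Type*} [AddCommGroup W] [Module ℚ W] (P F : Set W) :
    Set (Module.Dual ℚ W) :=
  {y | ∀ x ∈ F, ∀ p ∈ P, y x ≤ y p}

/-- A face of a cone `P`: a subset of the form `face_y(P)` for some linear functional `y`. -/
def IsFace {W : Type*} [AddCommGroup W] [Module ℚ W] (P F : Set W) : Prop :=
  ∃ y : Module.Dual ℚ W, F = {x ∈ P | ∀ p ∈ P, y x ≤ y p}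

/-- Algebraic relative interior of a convex set. -/
def relint {W : Type*} [AddCommGroup W] [Module ℚ W] (F : Set W) : Set W :=
  {x ∈ F | ∀ y ∈ F, ∃ ε : ℚ, 0 < ε ∧ x + ε • (x - y) ∈ F}

/-- The linear span `⟨F⟩` of differences of elements of `F`. -/
def spanDiff {W : Type*} [AddCommGroup W] [Module ℚ W] (F : Set W) : Submodule ℚ W :=
  Submodule.span ℚ {v | ∃ x ∈ F, ∃ y ∈ F, v = x - y}

/-! Both normal cones consist of the functionals that vanish on the face and are nonnegative on
the cone. Such a functional vanishes on `⟨F⟩`, so as `⟨F⟩ + M = V` it is determined by its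
restriction to `M`. Conversely, let `z` lie in the normal cone on `M` and `x₀ ∈ relint F ∩ M`.
Starting at `x₀` one stays in `P` for a short time in every direction of `P + ⟨F⟩`, so `z ≥ 0` on
`M ∩ (P + ⟨F⟩)`. Hence `z` vanishes on `M ∩ ⟨F⟩` and extends by zero on `⟨F⟩` to a functional
on `V`, which is then nonnegative on `P`. -/

section

variable {V : Type*} [AddCommGroup V] [Module ℚ V]

theorem spanDiff_le_ker {F : Set V} {l : Module.Dual ℚ V} (h : ∀ x ∈ F, ∀ y ∈ F, l x = l y) :
    spanDiff F ≤ LinearMap.ker l := by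
  rw [spanDiff, Submodule.span_le]
  rintro _ ⟨x, hx, y, hy, rfl⟩
  simp [h x hx y hy]

theorem sub_mem_spanDiff {F : Set V} {x y : V} (hx : x ∈ F) (hy : y ∈ F) : x - y ∈ spanDiff F :=
  Submodule.subset_span ⟨x, hx, y, hy, rfl⟩

theorem spanDiff_le_ker_of_mem_normalCone {P F : Set V} (hFP : F ⊆ P) {u : Module.Dual ℚ V}
    (hu : u ∈ normalCone P F) : spanDiff F ≤ LinearMap.ker u :=
  spanDiff_le_ker fun x hx y hy => (hu x hx y (hFP hy)).antisymm (hu y hy x (hFP hx))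

theorem spanDiff_le_ker_of_apply_relint_eq_zero {F : Set V} {l : Module.Dual ℚ V}
    (hl : ∀ x ∈ F, 0 ≤ l x) {x₀ : V} (hx₀ : x₀ ∈ relint F) (h : l x₀ = 0) :
    spanDiff F ≤ LinearMap.ker l := by
  have hzero : ∀ x ∈ F, l x = 0 := fun x hx => by
    obtain ⟨ε, hε, hmem⟩ := hx₀.2 x hx
    have := hl _ hmem
    simp only [map_add, map_smul, map_sub, h, smul_eq_mul] at this
    nlinarith [hl x hx]
  exact spanDiff_le_ker fun x hx y hy => by rw [hzero x hx, hzero y hy]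

theorem IsFace.subset {P F : Set V} (hF : IsFace P F) : F ⊆ P := by
  obtain ⟨y, rfl⟩ := hF
  exact fun x hx => hx.1

namespace IsPolyhedralCone

variable {P : Set V}

theorem zero_mem (hP : IsPolyhedralCone P) : (0 : V) ∈ P := by
  obtain ⟨s, rfl⟩ := hP
  simp

theorem smul_mem (hP : IsPolyhedralCone P) {c : ℚ} (hc : 0 ≤ c) {x : V} (hx : x ∈ P) :
    c • x ∈ P := by
  obtain ⟨s, rfl⟩ := hP
  intro l hl
  simpa using mul_nonneg hc (hx l hl)

theorem preimage {W : Type*} [AddCommGroup W] [Module ℚ W] (hP : IsPolyhedralCone P)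
    (f : W →ₗ[ℚ] V) : IsPolyhedralCone (f ⁻¹' P) := by
  classical
  obtain ⟨s, rfl⟩ := hP
  exact ⟨s.image (·.comp f), by ext; simp⟩

theorem apply_eq_zero_of_mem_normalCone (hP : IsPolyhedralCone P) {F : Set V}
    {u : Module.Dual ℚ V} (hu : u ∈ normalCone P F) {x : V} (hxF : x ∈ F) (hxP : x ∈ P) :
    u x = 0 := by
  have h0 := hu x hxF 0 hP.zero_mem
  have h2 := hu x hxF _ (hP.smul_mem zero_le_two hxP)
  simp only [map_zero, map_smul, smul_eq_mul] at h0 h2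
  linarith

-- `v ∈ P + ⟨F⟩`: the constraints active at `x₀` vanish on `⟨F⟩`, the others have slack.
theorem exists_add_smul_mem (hP : IsPolyhedralCone P) {F : Set V} (hFP : F ⊆ P) {x₀ : V}
    (hx₀ : x₀ ∈ relint F) {p v : V} (hp : p ∈ P) (hv : v - p ∈ spanDiff F) :
    ∃ ε : ℚ, 0 < ε ∧ x₀ + ε • v ∈ P := by
  obtain ⟨s, rfl⟩ := hP
  have hx₀P : ∀ l ∈ s, 0 ≤ l x₀ := hFP hx₀.1
  suffices ∀ l ∈ s, ∀ᶠ ε in nhdsWithin (0 : ℚ) (Set.Ioi 0), 0 ≤ l (x₀ + ε • v) from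
    (((Filter.eventually_all_finset s).2 this).and self_mem_nhdsWithin).exists.imp
      fun ε h => ⟨h.2, h.1⟩
  intro l hl
  rcases (hx₀P l hl).eq_or_lt with hact | hslack
  · have hlv : l v = l p := by
      simpa [sub_eq_zero] using spanDiff_le_ker_of_apply_relint_eq_zero
        (fun x hx => hFP hx l hl) hx₀ hact.symm hv
    filter_upwards [self_mem_nhdsWithin] with ε (hε : 0 < ε)
    simp only [map_add, map_smul, smul_eq_mul, hlv, ← hact]
    exact add_nonneg le_rfl (mul_nonneg hε.le (hp l hl))
  · have hcont : Continuous fun ε : ℚ => l x₀ + ε * l v := by fun_prop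
    have := (hcont.tendsto 0).eventually_const_lt (by simpa using hslack)
    exact nhdsWithin_le_nhds (this.mono fun ε h => by simpa using h.le)

theorem nonneg_of_sub_mem_spanDiff (hP : IsPolyhedralCone P) {F : Set V} (hFP : F ⊆ P)
    {M : Submodule ℚ V} {x₀ : M} (hx₀ : (x₀ : V) ∈ relint F) {z : Module.Dual ℚ M}
    (hz₀ : z x₀ = 0) (hzP : ∀ m : M, (m : V) ∈ P → 0 ≤ z m) {m : M} {p : V} (hp : p ∈ P)
    (hmp : (m : V) - p ∈ spanDiff F) : 0 ≤ z m := by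
  obtain ⟨ε, hε, hmem⟩ := hP.exists_add_smul_mem hFP hx₀ hp hmp
  have := hzP (x₀ + ε • m) (by simpa using hmem)
  rw [map_add, map_smul, hz₀, smul_eq_mul, zero_add] at this
  exact nonneg_of_mul_nonneg_right this hε

end IsPolyhedralCone

theorem Submodule.exists_sub_mem_of_sup_eq_top {R W : Type*} [Ring R] [AddCommGroup W]
    [Module R W] {N M : Submodule R W} (hNM : N ⊔ M = ⊤) (v : W) :
    ∃ m : M, (m : W) - v ∈ N := by
  obtain ⟨n, hn, m, hm, rfl⟩ := Submodule.mem_sup.1 (hNM ▸ Submodule.mem_top : v ∈ N ⊔ M)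
  exact ⟨⟨m, hm⟩, by simpa using N.neg_mem hn⟩

theorem Submodule.exists_dual_ker_le_comp_subtype_eq {R W : Type*} [CommRing R] [AddCommGroup W]
    [Module R W] {N M : Submodule R W} (hNM : N ⊔ M = ⊤) (z : Module.Dual R M)
    (hz : ∀ m : M, (m : W) ∈ N → z m = 0) :
    ∃ u : Module.Dual R W, N ≤ LinearMap.ker u ∧ u.comp M.subtype = z := by
  set f := N.mkQ.comp M.subtype
  have hf : Function.Surjective f := by
    rintro ⟨v⟩
    obtain ⟨m, hm⟩ := Submodule.exists_sub_mem_of_sup_eq_top hNM v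
    exact ⟨m, (Submodule.Quotient.eq N).2 hm⟩
  have hker : LinearMap.ker f ≤ LinearMap.ker z := fun m hm => hz m (by simpa [f] using hm)
  refine ⟨((LinearMap.ker f).liftQ z hker).comp
    ((f.quotKerEquivOfSurjective hf).symm.toLinearMap.comp N.mkQ), fun n hn => by
      simp [(Submodule.Quotient.mk_eq_zero N).2 hn], ?_⟩
  ext m
  change (LinearMap.ker f).liftQ z hker ((f.quotKerEquivOfSurjective hf).symm (f m)) = z m
  rw [LinearMap.quotKerEquivOfSurjective_symm_apply, Submodule.liftQ_apply]

end

theorem normalCone_bijOn_restriction_general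
    (V : Type*) [AddCommGroup V] [Module ℚ V]
    (M : Submodule ℚ V) (P F : Set V)
    (hP : IsPolyhedralCone P) (hF : IsFace P F)
    (hrel : (relint F ∩ (M : Set V)).Nonempty)
    (hspan : spanDiff F ⊔ M = ⊤) :
    Set.BijOn (fun y : Module.Dual ℚ V => y.comp M.subtype)
      (normalCone P F)
      (normalCone {x : M | (x : V) ∈ P} {x : M | (x : V) ∈ F}) := by
  obtain ⟨x₀, hx₀, hx₀M⟩ := hrel
  have hFP := hF.subset
  refine ⟨fun u hu x hx p hp => hu x hx p hp, fun u₁ hu₁ u₂ hu₂ h => ?_, fun z hz => ?_⟩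
  · exact LinearMap.ext_on_codisjoint (codisjoint_iff.2 hspan)
      (fun n hn => (spanDiff_le_ker_of_mem_normalCone hFP hu₁ hn).trans
        (spanDiff_le_ker_of_mem_normalCone hFP hu₂ hn).symm)
      (fun m hm => LinearMap.congr_fun h ⟨m, hm⟩)
  have hz₀ : z ⟨x₀, hx₀M⟩ = 0 :=
    (hP.preimage M.subtype).apply_eq_zero_of_mem_normalCone hz hx₀.1 (hFP hx₀.1)
  have hz_nonneg {m : M} {p : V} : p ∈ P → (m : V) - p ∈ spanDiff F → 0 ≤ z m :=
    hP.nonneg_of_sub_mem_spanDiff hFP (x₀ := ⟨x₀, hx₀M⟩) hx₀ hz₀ fun m hm => hz₀ ▸ hz _ hx₀.1 m hm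
  obtain ⟨u, hNu, huz⟩ := Submodule.exists_dual_ker_le_comp_subtype_eq hspan z fun w hw =>
    le_antisymm (by simpa using hz_nonneg (m := -w) hP.zero_mem (by simpa using neg_mem hw))
      (hz_nonneg hP.zero_mem (by simpa using hw))
  refine ⟨u, fun x hx p hp => ?_, huz⟩
  obtain ⟨m, hm⟩ := Submodule.exists_sub_mem_of_sup_eq_top hspan p
  calc u x = u x₀ := by simpa [sub_eq_zero] using hNu (sub_mem_spanDiff hx hx₀.1)
    _ = 0 := by rw [← hz₀, ← huz]; rfl
    _ ≤ z m := hz_nonneg hp hm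
    _ = u p := by rw [← huz]; simpa [sub_eq_zero] using hNu hm

/-- For an `M`-stable face `F` of `P`, restriction of functionals gives a bijection
from the normal cone of `F` in `P` onto the normal cone of `F ∩ M` in `P ∩ M`. -/
theorem normalCone_bijOn_restriction
    (V : Type*) [AddCommGroup V] [Module ℚ V] [FiniteDimensional ℚ V]
    (M : Submodule ℚ V) (P F : Set V)
    (hP : IsPolyhedralCone P) (hF : IsFace P F)
    (hrel : (relint F ∩ (M : Set V)).Nonempty)
    (hspan : spanDiff F ⊔ M = ⊤) :
    Set.BijOn (fun y : Module.Dual ℚ V => y.comp M.subtype)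
      (normalCone P F)
      (normalCone {x : M | (x : V) ∈ P} {x : M | (x : V) ∈ F}) :=
  normalCone_bijOn_restriction_general V M P F hP hF hrel hspan
end

section
/- Let V be a finite-dimensional rational vector space, M ⊆ V a subspace, P ⊆ V a polyhedral cone, and F an M-stable face of P, i.e., the relative interior of F meets M and ⟨F⟩ + M = V. Then the restriction map V* → M* induces an isomorphism of vector spaces from F^⊥ = { y ∈ V* : ⟨F, y⟩ = 0 } onto F_M^⊥ = { z ∈ M* : ⟨F ∩ M, z⟩ = 0 }, where we assume 0 ∈ F. -/
/-!
A face `F ∋ 0` of a polyhedral cone is itself a cone, so `⟨F⟩ = F - F`. For `x₀ ∈ relint F` and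
`v ∈ ⟨F⟩`, the point `x₀ + ε v` lies in `F` for some `ε > 0`; taking `x₀ ∈ M` and `v ∈ M`, it lies in
`F ∩ M`. Hence a functional on `M` killing `F ∩ M` kills `⟨F⟩ ∩ M`, the kernel of the surjection
`M → V ⧸ ⟨F⟩` (surjective because `⟨F⟩ + M = V`), so it factors through `V ⧸ ⟨F⟩`: it is the
restriction of a functional killing `F`. That functional is unique, being prescribed on `⟨F⟩` and
on `M`.
-/

open Module

section

variable {W : Type*} [AddCommGroup W] [Module ℚ W]

lemma IsPolyhedralCone.exists_pointedCone_eq {P : Set W} (hP : IsPolyhedralCone P) :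
    ∃ C : PointedCone ℚ W, (C : Set W) = P := by
  obtain ⟨s, rfl⟩ := hP
  exact ⟨PointedCone.dual LinearMap.id s, Set.ext fun _ => Iff.rfl⟩

lemma IsFace.eq_inter_ker {P F : Set W} (hF : IsFace P F) (h0 : (0 : W) ∈ F) :
    ∃ y : Dual ℚ W, F = P ∩ LinearMap.ker y := by
  obtain ⟨y, rfl⟩ := hF
  have hy : ∀ p ∈ P, 0 ≤ y p := fun p hp => by simpa using h0.2 p hp
  refine ⟨y, Set.ext fun x => ⟨fun hx => ⟨hx.1, ?_⟩, fun hx => ⟨hx.1, fun p hp => ?_⟩⟩⟩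
  · exact le_antisymm (by simpa using hx.2 0 h0.1) (hy x hx.1)
  · rw [LinearMap.mem_ker.1 hx.2]
    exact hy p hp

lemma IsFace.exists_pointedCone_eq {C : PointedCone ℚ W} {F : Set W} (hF : IsFace C F)
    (h0 : (0 : W) ∈ F) : ∃ D : PointedCone ℚ W, (D : Set W) = F := by
  obtain ⟨y, rfl⟩ := hF.eq_inter_ker h0
  exact ⟨C ⊓ PointedCone.ofSubmodule (LinearMap.ker y), rfl⟩

lemma subset_spanDiff {F : Set W} (h0 : (0 : W) ∈ F) : F ⊆ spanDiff F :=
  fun x hx => Submodule.subset_span ⟨x, hx, 0, h0, (sub_zero x).symm⟩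

lemma spanDiff_le_ker_s6 {N : Type*} [AddCommGroup N] [Module ℚ N] {F : Set W} {y : W →ₗ[ℚ] N}
    (hy : ∀ x ∈ F, y x = 0) : spanDiff F ≤ LinearMap.ker y := by
  rw [spanDiff, Submodule.span_le]
  rintro _ ⟨a, ha, b, hb, rfl⟩
  simp [hy a ha, hy b hb]

end

namespace PointedCone

variable {W : Type*} [AddCommGroup W] [Module ℚ W] (C : PointedCone ℚ W)

lemma mem_spanDiff_iff {v : W} : v ∈ spanDiff (C : Set W) ↔ ∃ a ∈ C, ∃ b ∈ C, v = a - b := by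
  refine ⟨fun hv => ?_, fun ⟨a, ha, b, hb, hv⟩ => Submodule.subset_span ⟨a, ha, b, hb, hv⟩⟩
  induction hv using Submodule.span_induction with
  | mem v hv => exact hv
  | zero => exact ⟨0, C.zero_mem, 0, C.zero_mem, (sub_zero 0).symm⟩
  | add u w _ _ hu hw =>
    obtain ⟨a, ha, b, hb, rfl⟩ := hu
    obtain ⟨a', ha', b', hb', rfl⟩ := hw
    exact ⟨a + a', C.add_mem ha ha', b + b', C.add_mem hb hb', (add_sub_add_comm ..).symm⟩
  | smul c u _ hu =>
    obtain ⟨a, ha, b, hb, rfl⟩ := hu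
    rcases le_total 0 c with hc | hc
    · exact ⟨c • a, C.smul_mem hc ha, c • b, C.smul_mem hc hb, smul_sub c a b⟩
    · refine ⟨(-c) • b, C.smul_mem (neg_nonneg.2 hc) hb, (-c) • a,
        C.smul_mem (neg_nonneg.2 hc) ha, ?_⟩
      rw [neg_smul, neg_smul, neg_sub_neg, smul_sub]

lemma exists_add_smul_mem_of_mem_relint {x₀ v : W} (hx₀ : x₀ ∈ relint (C : Set W))
    (hv : v ∈ spanDiff (C : Set W)) : ∃ ε : ℚ, 0 < ε ∧ x₀ + ε • v ∈ C := by
  obtain ⟨a, ha, b, hb, rfl⟩ := C.mem_spanDiff_iff.1 hv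
  obtain ⟨ε, hε, hεb⟩ := hx₀.2 b hb
  have hsum : x₀ + ε • (x₀ - b) + ε • a ∈ C := C.add_mem hεb (C.smul_mem hε.le ha)
  -- `hsum` is `(1 + ε) • x₀ + ε • (a - b)`; rescale by `(1 + ε)⁻¹`.
  refine ⟨ε / (1 + ε), by positivity, ?_⟩
  convert C.smul_mem (inv_nonneg.2 (by positivity : (0 : ℚ) ≤ 1 + ε)) hsum using 1
  match_scalars <;> field_simp

lemma apply_eq_zero_of_mem_spanDiff {N : Type*} [AddCommGroup N] [Module ℚ N] {M : Submodule ℚ W}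
    (hrel : (relint (C : Set W) ∩ M).Nonempty) {z : M →ₗ[ℚ] N}
    (hz : ∀ x : M, (x : W) ∈ C → z x = 0) {x : M} (hx : (x : W) ∈ spanDiff (C : Set W)) :
    z x = 0 := by
  obtain ⟨x₀, hx₀, hx₀M⟩ := hrel
  obtain ⟨ε, hε, hmem⟩ := C.exists_add_smul_mem_of_mem_relint hx₀ hx
  have h := hz (⟨x₀, hx₀M⟩ + ε • x) hmem
  rwa [map_add, map_smul, hz ⟨x₀, hx₀M⟩ hx₀.1, zero_add, smul_eq_zero, or_iff_right hε.ne'] at h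

end PointedCone

theorem Submodule.exists_comp_subtype_eq_of_sup_eq_top {R M N : Type*} [Ring R] [AddCommGroup M]
    [Module R M] [AddCommGroup N] [Module R N] {S T : Submodule R M} (hST : S ⊔ T = ⊤)
    (z : T →ₗ[R] N) (hz : ∀ x : T, (x : M) ∈ S → z x = 0) :
    ∃ y : M →ₗ[R] N, S ≤ LinearMap.ker y ∧ y ∘ₗ T.subtype = z := by
  set g := S.mkQ ∘ₗ T.subtype
  have hg : Function.Surjective g := by
    rw [← LinearMap.range_eq_top, LinearMap.range_comp, Submodule.range_subtype,
      Submodule.map_mkQ_eq_top, hST]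
  have hker : LinearMap.ker g ≤ LinearMap.ker z := fun x hx => hz x (by simpa [g] using hx)
  let e := g.quotKerEquivOfSurjective hg
  refine ⟨(LinearMap.ker g).liftQ z hker ∘ₗ e.symm.toLinearMap ∘ₗ S.mkQ, fun x hx => ?_, ?_⟩
  · simp [(Submodule.Quotient.mk_eq_zero S).2 hx]
  · ext x
    have : e.symm (g x) = Submodule.Quotient.mk x := g.quotKerEquivOfSurjective_symm_apply hg x
    simpa [g] using congrArg ((LinearMap.ker g).liftQ z hker) this

theorem annihilator_bijOn_restriction_general
    (V : Type*) [AddCommGroup V] [Module ℚ V]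
    (M : Submodule ℚ V) (P F : Set V)
    (hP : IsPolyhedralCone P) (hF : IsFace P F) (h0 : (0 : V) ∈ F)
    (hrel : (relint F ∩ (M : Set V)).Nonempty)
    (hspan : spanDiff F ⊔ M = ⊤) :
    Set.BijOn (fun y : Module.Dual ℚ V => y.comp M.subtype)
      {y : Module.Dual ℚ V | ∀ x ∈ F, y x = 0}
      {z : Module.Dual ℚ M | ∀ x : M, (x : V) ∈ F → z x = 0} := by
  obtain ⟨C, rfl⟩ := hP.exists_pointedCone_eq
  obtain ⟨D, rfl⟩ := hF.exists_pointedCone_eq h0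
  refine ⟨fun y hy x hx => hy x hx, fun y₁ hy₁ y₂ hy₂ h => ?_, fun z hz => ?_⟩
  · refine LinearMap.ext_on_codisjoint (codisjoint_iff.2 hspan) (fun x hx => ?_)
      (fun x hx => LinearMap.congr_fun h ⟨x, hx⟩)
    rw [spanDiff_le_ker_s6 hy₁ hx, spanDiff_le_ker_s6 hy₂ hx]
  · obtain ⟨y, hy, rfl⟩ := Submodule.exists_comp_subtype_eq_of_sup_eq_top hspan z
      fun x hx => D.apply_eq_zero_of_mem_spanDiff hrel hz hx
    exact ⟨y, fun x hx => hy (subset_spanDiff h0 hx), rfl⟩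

/-- For an `M`-stable face `F` of `P` with `0 ∈ F`, restriction of functionals gives an
isomorphism from the annihilator of `F` in the dual of `V` onto the annihilator of
`F ∩ M` in the dual of `M`. -/
theorem annihilator_bijOn_restriction
    (V : Type*) [AddCommGroup V] [Module ℚ V] [FiniteDimensional ℚ V]
    (M : Submodule ℚ V) (P F : Set V)
    (hP : IsPolyhedralCone P) (hF : IsFace P F) (h0 : (0 : V) ∈ F)
    (hrel : (relint F ∩ (M : Set V)).Nonempty)
    (hspan : spanDiff F ⊔ M = ⊤) :
    Set.BijOn (fun y : Module.Dual ℚ V => y.comp M.subtype)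
      {y : Module.Dual ℚ V | ∀ x ∈ F, y x = 0}
      {z : Module.Dual ℚ M | ∀ x : M, (x : V) ∈ F → z x = 0} :=
  annihilator_bijOn_restriction_general V M P F hP hF h0 hrel hspan
end
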